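/- arXiv:0908.0556 — 2 statements merged into one kernel-verified Lean document; each statement's English description precedes it below -/
import Mathlib

section
/- Let M be a compact metric space, let μ and μ_j (j ∈ ℕ) be finite Borel measures on M, and assume μ_j → μ weakly, i.e. ∫ f dμ_j → ∫ f dμ for every bounded continuous f : M → ℝ. Let E ⊆ M be a Borel set which is 'quasi-open with uniformly small exceptional sets' in the following sense: for every ε > 0 there exist an open set O ⊆ M and Borel sets G, G' ⊆ M with E ⊆ O ∪ G, O ⊆ E ∪ G', μ(G) ≤ ε, and μ_j(G') ≤ ε for every j. Then μ(E) ≤ liminf_{j→∞} μ_j(E). -/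
/-!
The open-set portmanteau inequality `μ O ≤ liminf μⱼ O` passes to `E` at the cost of the
exceptional sets, `μ E ≤ μ O + ε` and `μⱼ O ≤ μⱼ E + ε`; the second bound has to be uniform in `j`
to survive the liminf. For finite (not probability) measures the open-set inequality follows from
the closed-set one by complementation, since weak convergence makes the total masses converge.
-/

open Filter Topology MeasureTheory
open scoped ENNReal NNReal

theorem ENNReal.tsub_le_liminf_tsub {ι : Type*} {L : Filter ι} {u v : ι → ℝ≥0∞} {a b : ℝ≥0∞}
    (hu : Tendsto u L (𝓝 a)) (ha : a ≠ ∞) (hv : L.limsup v ≤ b) :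
    a - b ≤ L.liminf fun i ↦ u i - v i := by
  rcases L.eq_or_neBot with rfl | _
  · simp
  have hau : Tendsto (fun i ↦ a - u i) L (𝓝 0) := by
    simpa using ENNReal.Tendsto.sub tendsto_const_nhds hu (Or.inl ha)
  calc a - b ≤ a - L.limsup v := tsub_le_tsub_left hv a
    _ = L.liminf fun i ↦ a - v i := (ENNReal.liminf_const_sub L v ha).symm
    _ ≤ L.liminf ((fun i ↦ a - u i) + fun i ↦ u i - v i) :=
      liminf_le_liminf (.of_forall fun _ ↦ tsub_le_tsub_add_tsub)
    _ = L.liminf fun i ↦ u i - v i := ENNReal.liminf_add_of_left_tendsto_zero hau _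

namespace MeasureTheory

theorem FiniteMeasure.le_liminf_measure_open_of_tendsto {Ω ι : Type*} {L : Filter ι}
    [MeasurableSpace Ω] [TopologicalSpace Ω] [OpensMeasurableSpace Ω] [HasOuterApproxClosed Ω]
    {μ : FiniteMeasure Ω} {μs : ι → FiniteMeasure Ω} (μs_lim : Tendsto μs L (𝓝 μ))
    {G : Set Ω} (G_open : IsOpen G) :
    (μ : Measure Ω) G ≤ L.liminf fun i ↦ (μs i : Measure Ω) G := by
  have compl_eq (ν : FiniteMeasure Ω) : (ν : Measure Ω) G = ν.mass - (ν : Measure Ω) Gᶜ := by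
    rw [← compl_compl G, measure_compl G_open.isClosed_compl.measurableSet (measure_ne_top _ _),
      compl_compl, FiniteMeasure.ennreal_mass]
  simp_rw [compl_eq]
  exact ENNReal.tsub_le_liminf_tsub (ENNReal.tendsto_coe.mpr μs_lim.mass) ENNReal.coe_ne_top
    (FiniteMeasure.limsup_measure_closed_le_of_tendsto μs_lim G_open.isClosed_compl)

theorem measure_le_add_of_subset_union {Ω : Type*} [MeasurableSpace Ω] {μ : Measure Ω}
    {s t u : Set Ω} {ε : ℝ≥0∞} (hs : s ⊆ t ∪ u) (hu : μ u ≤ ε) : μ s ≤ μ t + ε :=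
  (measure_mono hs).trans ((measure_union_le t u).trans (add_le_add_right hu _))

theorem measure_le_liminf_of_approx_by_open {Ω ι : Type*} [MeasurableSpace Ω]
    [TopologicalSpace Ω] {L : Filter ι} {μ : Measure Ω} {μs : ι → Measure Ω} {E : Set Ω}
    (h_open : ∀ O, IsOpen O → μ O ≤ L.liminf fun i ↦ μs i O)
    (h_approx : ∀ ε : ℝ≥0, 0 < ε → ∃ O, IsOpen O ∧ μ E ≤ μ O + ε ∧ ∀ i, μs i O ≤ μs i E + ε) :
    μ E ≤ L.liminf fun i ↦ μs i E := by
  rcases L.eq_or_neBot with rfl | _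
  · simp
  refine ENNReal.le_of_forall_pos_le_add fun ε hε _ ↦ ?_
  obtain ⟨O, hO, hEO, hOE⟩ := h_approx (ε / 2) (half_pos hε)
  calc μ E ≤ μ O + (ε / 2 : ℝ≥0) := hEO
    _ ≤ L.liminf (fun i ↦ μs i E + (ε / 2 : ℝ≥0)) + (ε / 2 : ℝ≥0) := by
      gcongr
      exact (h_open O hO).trans (liminf_le_liminf (.of_forall hOE))
    _ = L.liminf (fun i ↦ μs i E) + ε := by
      rw [liminf_add_const L _ _ (by isBoundedDefault) (by isBoundedDefault), add_assoc,
        ← ENNReal.coe_add, add_halves]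

end MeasureTheory

theorem measure_le_liminf_of_quasiOpen_general {M : Type*} [MetricSpace M]
    [MeasurableSpace M] [BorelSpace M]
    (μ : Measure M) (μs : ℕ → Measure M)
    [IsFiniteMeasure μ] [∀ j, IsFiniteMeasure (μs j)]
    (hweak : ∀ f : BoundedContinuousFunction M ℝ,
      Tendsto (fun j => ∫ x, f x ∂(μs j)) atTop (𝓝 (∫ x, f x ∂μ)))
    (E : Set M)
    (hquasi : ∀ ε : ℝ, 0 < ε → ∃ O G G' : Set M,
      IsOpen O ∧ MeasurableSet G ∧ MeasurableSet G' ∧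
      E ⊆ O ∪ G ∧ O ⊆ E ∪ G' ∧
      μ G ≤ ENNReal.ofReal ε ∧ ∀ j, μs j G' ≤ ENNReal.ofReal ε) :
    μ E ≤ liminf (fun j => μs j E) atTop := by
  let ν : FiniteMeasure M := ⟨μ, inferInstance⟩
  let νs : ℕ → FiniteMeasure M := fun j ↦ ⟨μs j, inferInstance⟩
  have hν : Tendsto νs atTop (𝓝 ν) := FiniteMeasure.tendsto_iff_forall_integral_tendsto.mpr hweak
  refine measure_le_liminf_of_approx_by_open
    (fun O hO ↦ FiniteMeasure.le_liminf_measure_open_of_tendsto hν hO) fun ε hε ↦ ?_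
  obtain ⟨O, G, G', hO, -, -, hEO, hOE, hG, hG'⟩ := hquasi ε hε
  rw [ENNReal.ofReal_coe_nnreal] at hG hG'
  exact ⟨O, hO, measure_le_add_of_subset_union hEO hG,
    fun j ↦ measure_le_add_of_subset_union hOE (hG' j)⟩

/-- **Portmanteau inequality for quasi-open sets.** If finite Borel measures `μ j`
converge weakly to `μ` on a compact metric space, and `E` is quasi-open with
uniformly small exceptional sets, then `μ E ≤ liminf_j (μ j) E`. -/
theorem measure_le_liminf_of_quasiOpen {M : Type*} [MetricSpace M] [CompactSpace M]
    [MeasurableSpace M] [BorelSpace M]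
    (μ : Measure M) (μs : ℕ → Measure M)
    [IsFiniteMeasure μ] [∀ j, IsFiniteMeasure (μs j)]
    (hweak : ∀ f : BoundedContinuousFunction M ℝ,
      Tendsto (fun j => ∫ x, f x ∂(μs j)) atTop (𝓝 (∫ x, f x ∂μ)))
    (E : Set M) (hE : MeasurableSet E)
    (hquasi : ∀ ε : ℝ, 0 < ε → ∃ O G G' : Set M,
      IsOpen O ∧ MeasurableSet G ∧ MeasurableSet G' ∧
      E ⊆ O ∪ G ∧ O ⊆ E ∪ G' ∧
      μ G ≤ ENNReal.ofReal ε ∧ ∀ j, μs j G' ≤ ENNReal.ofReal ε) :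
    μ E ≤ liminf (fun j => μs j E) atTop :=
  measure_le_liminf_of_quasiOpen_general μ μs hweak E hquasi
end

section
/- Let M be a compact metric space. Let u, v : M → ℝ be bounded upper semicontinuous functions, and let (u_k)_{k∈ℕ} and (v_j)_{j∈ℕ} be sequences of continuous real-valued functions on M such that for every x ∈ M, (u_k(x)) is antitone with pointwise limit u(x) and (v_j(x)) is antitone with pointwise limit v(x). Let (μ_k), (ν_j), μ, ν be finite Borel measures on M with μ_k → μ and ν_j → ν weakly. Assume: (i) there is a constant C such that for every ε with 0 < ε < 1 there exist a Borel set G ⊆ M and continuous functions U, V : M → ℝ with u = U and v = V on M \ G, and μ(G) ≤ Cε, ν(G) ≤ Cε, μ_k(G) ≤ Cε and ν_k(G) ≤ Cε for every k; (ii) for every k there exists J_k such that for all j ≥ J_k, ν_j({x ∈ M : u_k(x) < v_j(x)}) ≤ μ_k({x ∈ M : u_k(x) < v_j(x)}). Then ν({x ∈ M : u(x) < v(x)}) ≤ μ({x ∈ M : u(x) ≤ v(x)}). -/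
/-!
Fix `ε` and the exceptional set `G` of hypothesis (i): off `G`, `u` and `v` agree with the
continuous `U` and `V`, so `F = {U ≤ V}` is closed, and every exchange of `u, v` for `U, V`
costs at most `Cε` in each measure. For fixed `k`, the set `{u_k < V}` is open, so by the
portmanteau theorem its `ν`-mass is at most `liminf_j ν_j {u_k < V}`; hypothesis (ii) bounds
this by `lim_j μ_k {u_k < v_j} = μ_k (⋂_j {u_k < v_j}) ≤ μ_k {u_k ≤ v}`, and `{u_k ≤ v}` lies
in `F` off `G`. As `k → ∞` the sets `{u_k < v}` increase to `{u < v}`, while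
`limsup_k μ_k F ≤ μ F` because `F` is closed. Hence `ν {u < v} ≤ μ {u ≤ v} + 4Cε` for all `ε`.
-/

open Filter Topology MeasureTheory Set
open scoped ENNReal

theorem ENNReal.sub_limsup_le_liminf_sub {ι : Type*} {L : Filter ι} [L.NeBot]
    {x y : ι → ℝ≥0∞} {a : ℝ≥0∞} (ha : a ≠ ∞) (hx : Tendsto x L (𝓝 a)) :
    a - limsup y L ≤ liminf (fun i ↦ x i - y i) L := by
  have hgap : Tendsto (fun i ↦ a - x i) L (𝓝 0) := by
    simpa using ENNReal.Tendsto.sub tendsto_const_nhds hx (Or.inl ha)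
  calc a - limsup y L = liminf (fun i ↦ a - y i) L := (ENNReal.liminf_const_sub L y ha).symm
    _ ≤ liminf ((fun i ↦ x i - y i) + fun i ↦ a - x i) L :=
        liminf_le_liminf (.of_forall fun i ↦ by
          simpa only [Pi.add_apply, add_comm] using tsub_le_tsub_add_tsub)
    _ = liminf (fun i ↦ x i - y i) L := ENNReal.liminf_add_of_right_tendsto_zero hgap _

theorem MeasureTheory.measure_le_add_of_diff_subset {α : Type*} [MeasurableSpace α]
    {m : Measure α} {s t G : Set α} {c : ℝ≥0∞} (h : s \ G ⊆ t) (hG : m G ≤ c) :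
    m s ≤ m t + c :=
  calc m s ≤ m (G ∪ t) := measure_mono (sdiff_subset_iff.mp h)
    _ ≤ m G + m t := measure_union_le _ _
    _ ≤ m t + c := by rw [add_comm]; gcongr

section Portmanteau

variable {Ω ι : Type*} [MeasurableSpace Ω] [TopologicalSpace Ω]
  {L : Filter ι} {μs : ι → Measure Ω} {μ : Measure Ω} [∀ i, IsFiniteMeasure (μs i)]
  [IsFiniteMeasure μ]

theorem limsup_measure_closed_le_of_forall_integral_tendsto
    [OpensMeasurableSpace Ω] [HasOuterApproxClosed Ω]
    (hw : ∀ f : BoundedContinuousFunction Ω ℝ,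
      Tendsto (fun i ↦ ∫ x, f x ∂(μs i)) L (𝓝 (∫ x, f x ∂μ)))
    {F : Set Ω} (hF : IsClosed F) :
    limsup (fun i ↦ μs i F) L ≤ μ F :=
  FiniteMeasure.limsup_measure_closed_le_of_tendsto (μs := fun i ↦ ⟨μs i, inferInstance⟩)
    (μ := ⟨μ, inferInstance⟩) (FiniteMeasure.tendsto_iff_forall_integral_tendsto.mpr hw) hF

theorem tendsto_measure_univ_of_forall_integral_tendsto
    (hw : ∀ f : BoundedContinuousFunction Ω ℝ,
      Tendsto (fun i ↦ ∫ x, f x ∂(μs i)) L (𝓝 (∫ x, f x ∂μ))) :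
    Tendsto (fun i ↦ μs i univ) L (𝓝 (μ univ)) := by
  simpa [ofReal_measureReal] using
    ENNReal.tendsto_ofReal (hw (BoundedContinuousFunction.const Ω 1))

theorem le_liminf_measure_open_of_forall_integral_tendsto
    [OpensMeasurableSpace Ω] [HasOuterApproxClosed Ω]
    (hw : ∀ f : BoundedContinuousFunction Ω ℝ,
      Tendsto (fun i ↦ ∫ x, f x ∂(μs i)) L (𝓝 (∫ x, f x ∂μ)))
    {G : Set Ω} (hG : IsOpen G) :
    μ G ≤ liminf (fun i ↦ μs i G) L := by
  rcases L.eq_or_neBot with rfl | _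
  · simp
  have hcompl (m : Measure Ω) [IsFiniteMeasure m] : m G = m univ - m Gᶜ := by
    rw [← measure_compl hG.measurableSet.compl (measure_ne_top _ _), compl_compl]
  calc μ G = μ univ - μ Gᶜ := hcompl μ
    _ ≤ μ univ - limsup (fun i ↦ μs i Gᶜ) L :=
        tsub_le_tsub_left (limsup_measure_closed_le_of_forall_integral_tendsto hw
          hG.isClosed_compl) _
    _ ≤ liminf (fun i ↦ μs i univ - μs i Gᶜ) L :=
        ENNReal.sub_limsup_le_liminf_sub (measure_ne_top _ _)
          (tendsto_measure_univ_of_forall_integral_tendsto hw)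
    _ = liminf (fun i ↦ μs i G) L := by simp only [← hcompl]

end Portmanteau

section Approximation

variable {M : Type*}

theorem iUnion_setOf_lt_eq_of_antitone_tendsto {f : ℕ → M → ℝ} {g h : M → ℝ}
    (hanti : ∀ x, Antitone fun k ↦ f k x)
    (hlim : ∀ x, Tendsto (fun k ↦ f k x) atTop (𝓝 (g x))) :
    ⋃ k, {x | f k x < h x} = {x | g x < h x} := by
  ext x
  simp only [mem_iUnion, mem_ofPred_eq]
  exact ⟨fun ⟨k, hk⟩ ↦ ((hanti x).le_of_tendsto (hlim x) k).trans_lt hk,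
    fun hx ↦ ((hlim x).eventually_lt_const hx).exists⟩

theorem iInter_setOf_lt_subset_setOf_le_of_tendsto {f : ℕ → M → ℝ} {g h : M → ℝ}
    (hlim : ∀ x, Tendsto (fun j ↦ f j x) atTop (𝓝 (g x))) :
    ⋂ j, {x | h x < f j x} ⊆ {x | h x ≤ g x} := fun x hx ↦
  ge_of_tendsto' (hlim x) fun j ↦ (mem_iInter.mp hx j).le

end Approximation

section Comparison

variable {M : Type*} [MeasurableSpace M] [TopologicalSpace M] [OpensMeasurableSpace M]
  [HasOuterApproxClosed M]

theorem measure_setOf_lt_le_of_antitone_approx_right {w v V : M → ℝ} {vj : ℕ → M → ℝ}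
    {m ν : Measure M} {νj : ℕ → Measure M} [IsFiniteMeasure m] [IsFiniteMeasure ν]
    [∀ j, IsFiniteMeasure (νj j)] {G : Set M} {c : ℝ≥0∞}
    (hw : Continuous w) (hV : Continuous V) (hvj_cont : ∀ j, Continuous (vj j))
    (hvj_anti : ∀ x, Antitone fun j ↦ vj j x)
    (hvj_lim : ∀ x, Tendsto (fun j ↦ vj j x) atTop (𝓝 (v x)))
    (hνweak : ∀ f : BoundedContinuousFunction M ℝ,
      Tendsto (fun j ↦ ∫ x, f x ∂(νj j)) atTop (𝓝 (∫ x, f x ∂ν)))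
    (hvV : ∀ x ∉ G, v x = V x) (hνG : ν G ≤ c) (hνjG : ∀ j, νj j G ≤ c)
    (hcomp : ∀ᶠ j in atTop, νj j {x | w x < vj j x} ≤ m {x | w x < vj j x}) :
    ν {x | w x < v x} ≤ m {x | w x ≤ v x} + c + c := by
  set E := fun j ↦ {x | w x < vj j x}
  have hv_le : ∀ j x, v x ≤ vj j x := fun j x ↦ (hvj_anti x).le_of_tendsto (hvj_lim x) j
  have hE_lim : Tendsto (fun j ↦ m (E j)) atTop (𝓝 (m (⋂ j, E j))) :=
    tendsto_measure_iInter_atTop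
      (fun j ↦ (isOpen_lt hw (hvj_cont j)).measurableSet.nullMeasurableSet)
      (fun i j hij x hx ↦ hx.trans_le (hvj_anti x hij)) ⟨0, measure_ne_top _ _⟩
  have hνj : ∀ᶠ j in atTop, νj j {x | w x < V x} ≤ m (E j) + c := by
    filter_upwards [hcomp] with j hj
    refine (measure_le_add_of_diff_subset ?_ (hνjG j)).trans (by gcongr)
    rintro x ⟨hx, hxG⟩
    exact (show w x < v x by rwa [hvV x hxG]).trans_le (hv_le j x)
  calc ν {x | w x < v x} ≤ ν {x | w x < V x} + c :=
        measure_le_add_of_diff_subset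
          (fun x ⟨hx, hxG⟩ ↦ show w x < V x by rwa [← hvV x hxG]) hνG
    _ ≤ liminf (fun j ↦ νj j {x | w x < V x}) atTop + c := by
        gcongr
        exact le_liminf_measure_open_of_forall_integral_tendsto hνweak (isOpen_lt hw hV)
    _ ≤ liminf (fun j ↦ m (E j) + c) atTop + c := by gcongr; exact liminf_le_liminf hνj
    _ = m (⋂ j, E j) + c + c := by rw [(hE_lim.add_const c).liminf_eq]
    _ ≤ m {x | w x ≤ v x} + c + c := by
        gcongr; exact iInter_setOf_lt_subset_setOf_le_of_tendsto hvj_lim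

theorem measure_setOf_lt_le_of_antitone_approx_left {u v : M → ℝ} {uk : ℕ → M → ℝ}
    {μ ν : Measure M} {μk : ℕ → Measure M} [IsFiniteMeasure μ] [∀ k, IsFiniteMeasure (μk k)]
    {F : Set M} {c : ℝ≥0∞} (hF : IsClosed F)
    (huk_anti : ∀ x, Antitone fun k ↦ uk k x)
    (huk_lim : ∀ x, Tendsto (fun k ↦ uk k x) atTop (𝓝 (u x)))
    (hμweak : ∀ f : BoundedContinuousFunction M ℝ,
      Tendsto (fun k ↦ ∫ x, f x ∂(μk k)) atTop (𝓝 (∫ x, f x ∂μ)))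
    (h : ∀ k, ν {x | uk k x < v x} ≤ μk k F + c) :
    ν {x | u x < v x} ≤ μ F + c := by
  have hmono : Monotone fun k ↦ {x | uk k x < v x} :=
    fun k k' hkk' x hx ↦ (huk_anti x hkk').trans_lt hx
  rw [← iUnion_setOf_lt_eq_of_antitone_tendsto huk_anti huk_lim, hmono.measure_iUnion]
  refine iSup_le fun k₀ ↦ ?_
  calc ν {x | uk k₀ x < v x} ≤ limsup (fun k ↦ μk k F + c) atTop :=
        le_limsup_of_frequently_le ((eventually_ge_atTop k₀).mono fun k hk ↦
          (measure_mono (hmono hk)).trans (h k)).frequently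
    _ = limsup (fun k ↦ μk k F) atTop + c :=
        limsup_add_const _ _ _ (by isBoundedDefault) (by isBoundedDefault)
    _ ≤ μ F + c := by
        gcongr
        exact limsup_measure_closed_le_of_forall_integral_tendsto hμweak hF

theorem measure_setOf_lt_le_add_of_eqOn_compl {u v U V : M → ℝ} {uk vj : ℕ → M → ℝ}
    {μ ν : Measure M} {μk νj : ℕ → Measure M} [IsFiniteMeasure μ] [IsFiniteMeasure ν]
    [∀ k, IsFiniteMeasure (μk k)] [∀ j, IsFiniteMeasure (νj j)] {G : Set M} {c : ℝ≥0∞}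
    (hU : Continuous U) (hV : Continuous V)
    (huk_cont : ∀ k, Continuous (uk k)) (hvj_cont : ∀ j, Continuous (vj j))
    (huk_anti : ∀ x, Antitone fun k ↦ uk k x) (hvj_anti : ∀ x, Antitone fun j ↦ vj j x)
    (huk_lim : ∀ x, Tendsto (fun k ↦ uk k x) atTop (𝓝 (u x)))
    (hvj_lim : ∀ x, Tendsto (fun j ↦ vj j x) atTop (𝓝 (v x)))
    (hμweak : ∀ f : BoundedContinuousFunction M ℝ,
      Tendsto (fun k ↦ ∫ x, f x ∂(μk k)) atTop (𝓝 (∫ x, f x ∂μ)))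
    (hνweak : ∀ f : BoundedContinuousFunction M ℝ,
      Tendsto (fun j ↦ ∫ x, f x ∂(νj j)) atTop (𝓝 (∫ x, f x ∂ν)))
    (huU : ∀ x ∉ G, u x = U x) (hvV : ∀ x ∉ G, v x = V x)
    (hμG : μ G ≤ c) (hνG : ν G ≤ c) (hμkG : ∀ k, μk k G ≤ c) (hνjG : ∀ j, νj j G ≤ c)
    (hcomp : ∀ k, ∃ J : ℕ, ∀ j ≥ J,
      νj j {x | uk k x < vj j x} ≤ μk k {x | uk k x < vj j x}) :
    ν {x | u x < v x} ≤ μ {x | u x ≤ v x} + 4 * c := by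
  have hk : ∀ k, ν {x | uk k x < v x} ≤ μk k {x | U x ≤ V x} + (c + c + c) := fun k ↦ by
    obtain ⟨J, hJ⟩ := hcomp k
    have hsub : {x | uk k x ≤ v x} \ G ⊆ {x | U x ≤ V x} := fun x ⟨hx, hxG⟩ ↦
      show U x ≤ V x by
        rw [← huU x hxG, ← hvV x hxG]
        exact ((huk_anti x).le_of_tendsto (huk_lim x) k).trans hx
    calc ν {x | uk k x < v x} ≤ μk k {x | uk k x ≤ v x} + c + c :=
          measure_setOf_lt_le_of_antitone_approx_right (huk_cont k) hV hvj_cont hvj_anti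
            hvj_lim hνweak hvV hνG hνjG (eventually_atTop.mpr ⟨J, hJ⟩)
      _ ≤ μk k {x | U x ≤ V x} + c + c + c := by
          gcongr ?_ + c + c
          exact measure_le_add_of_diff_subset hsub (hμkG k)
      _ = μk k {x | U x ≤ V x} + (c + c + c) := by ring
  have hsub : {x | U x ≤ V x} \ G ⊆ {x | u x ≤ v x} := fun x ⟨hx, hxG⟩ ↦
    show u x ≤ v x by rwa [huU x hxG, hvV x hxG]
  calc ν {x | u x < v x} ≤ μ {x | U x ≤ V x} + (c + c + c) :=
        measure_setOf_lt_le_of_antitone_approx_left (isClosed_le hU hV) huk_anti huk_lim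
          hμweak hk
    _ ≤ μ {x | u x ≤ v x} + c + (c + c + c) := by
        gcongr
        exact measure_le_add_of_diff_subset hsub hμG
    _ = μ {x | u x ≤ v x} + 4 * c := by ring

end Comparison

theorem comparison_limit_lemma_general {M : Type*} [MetricSpace M]
    [MeasurableSpace M] [BorelSpace M]
    (u v : M → ℝ) (uk vj : ℕ → M → ℝ)
    (huk_cont : ∀ k, Continuous (uk k)) (hvj_cont : ∀ j, Continuous (vj j))
    (huk_anti : ∀ x, Antitone fun k => uk k x)
    (hvj_anti : ∀ x, Antitone fun j => vj j x)
    (huk_lim : ∀ x, Tendsto (fun k => uk k x) atTop (𝓝 (u x)))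
    (hvj_lim : ∀ x, Tendsto (fun j => vj j x) atTop (𝓝 (v x)))
    (μk νj : ℕ → Measure M) (μ ν : Measure M)
    [∀ k, IsFiniteMeasure (μk k)] [∀ j, IsFiniteMeasure (νj j)]
    [IsFiniteMeasure μ] [IsFiniteMeasure ν]
    (hμweak : ∀ f : BoundedContinuousFunction M ℝ,
      Tendsto (fun k => ∫ x, f x ∂(μk k)) atTop (𝓝 (∫ x, f x ∂μ)))
    (hνweak : ∀ f : BoundedContinuousFunction M ℝ,
      Tendsto (fun j => ∫ x, f x ∂(νj j)) atTop (𝓝 (∫ x, f x ∂ν)))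
    (hcap : ∃ C : ℝ, ∀ ε : ℝ, 0 < ε → ε < 1 →
      ∃ (G : Set M) (U V : M → ℝ), MeasurableSet G ∧
        Continuous U ∧ Continuous V ∧
        (∀ x ∉ G, u x = U x) ∧ (∀ x ∉ G, v x = V x) ∧
        μ G ≤ ENNReal.ofReal (C * ε) ∧ ν G ≤ ENNReal.ofReal (C * ε) ∧
        (∀ k, μk k G ≤ ENNReal.ofReal (C * ε)) ∧
        (∀ k, νj k G ≤ ENNReal.ofReal (C * ε)))
    (hcomp : ∀ k, ∃ J : ℕ, ∀ j ≥ J,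
      νj j {x | uk k x < vj j x} ≤ μk k {x | uk k x < vj j x}) :
    ν {x | u x < v x} ≤ μ {x | u x ≤ v x} := by
  obtain ⟨C, hC⟩ := hcap
  have hsmall : Tendsto (fun ε ↦ 4 * ENNReal.ofReal (C * ε)) (𝓝[>] 0) (𝓝 0) := by
    have hCε : Tendsto (fun ε : ℝ ↦ C * ε) (𝓝[>] 0) (𝓝 0) := by
      simpa using ((continuous_const_mul C).tendsto 0).mono_left nhdsWithin_le_nhds
    simpa using
      ENNReal.Tendsto.const_mul (ENNReal.tendsto_ofReal hCε) (Or.inr ENNReal.ofNat_ne_top)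
  refine ge_of_tendsto (by simpa using tendsto_const_nhds.add hsmall) ?_
  filter_upwards [Ioo_mem_nhdsGT one_pos] with ε ⟨hε0, hε1⟩
  obtain ⟨G, U, V, -, hU, hV, huU, hvV, hμG, hνG, hμkG, hνjG⟩ := hC ε hε0 hε1
  exact measure_setOf_lt_le_add_of_eqOn_compl hU hV huk_cont hvj_cont huk_anti hvj_anti huk_lim
    hvj_lim hμweak hνweak huU hvV hμG hνG hμkG hνjG hcomp

/-- **Measure-theoretic axiomatization of the Bedford–Taylor limiting process
(Lemma 7 of the paper).** -/
theorem comparison_limit_lemma {M : Type*} [MetricSpace M] [CompactSpace M]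
    [MeasurableSpace M] [BorelSpace M]
    (u v : M → ℝ) (uk vj : ℕ → M → ℝ)
    (hu_bdd : ∃ C : ℝ, ∀ x, |u x| ≤ C) (hv_bdd : ∃ C : ℝ, ∀ x, |v x| ≤ C)
    (hu_usc : UpperSemicontinuous u) (hv_usc : UpperSemicontinuous v)
    (huk_cont : ∀ k, Continuous (uk k)) (hvj_cont : ∀ j, Continuous (vj j))
    (huk_anti : ∀ x, Antitone fun k => uk k x)
    (hvj_anti : ∀ x, Antitone fun j => vj j x)
    (huk_lim : ∀ x, Tendsto (fun k => uk k x) atTop (𝓝 (u x)))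
    (hvj_lim : ∀ x, Tendsto (fun j => vj j x) atTop (𝓝 (v x)))
    (μk νj : ℕ → Measure M) (μ ν : Measure M)
    [∀ k, IsFiniteMeasure (μk k)] [∀ j, IsFiniteMeasure (νj j)]
    [IsFiniteMeasure μ] [IsFiniteMeasure ν]
    (hμweak : ∀ f : BoundedContinuousFunction M ℝ,
      Tendsto (fun k => ∫ x, f x ∂(μk k)) atTop (𝓝 (∫ x, f x ∂μ)))
    (hνweak : ∀ f : BoundedContinuousFunction M ℝ,
      Tendsto (fun j => ∫ x, f x ∂(νj j)) atTop (𝓝 (∫ x, f x ∂ν)))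
    (hcap : ∃ C : ℝ, ∀ ε : ℝ, 0 < ε → ε < 1 →
      ∃ (G : Set M) (U V : M → ℝ), MeasurableSet G ∧
        Continuous U ∧ Continuous V ∧
        (∀ x ∉ G, u x = U x) ∧ (∀ x ∉ G, v x = V x) ∧
        μ G ≤ ENNReal.ofReal (C * ε) ∧ ν G ≤ ENNReal.ofReal (C * ε) ∧
        (∀ k, μk k G ≤ ENNReal.ofReal (C * ε)) ∧
        (∀ k, νj k G ≤ ENNReal.ofReal (C * ε)))
    (hcomp : ∀ k, ∃ J : ℕ, ∀ j ≥ J,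
      νj j {x | uk k x < vj j x} ≤ μk k {x | uk k x < vj j x}) :
    ν {x | u x < v x} ≤ μ {x | u x ≤ v x} :=
  comparison_limit_lemma_general u v uk vj huk_cont hvj_cont huk_anti hvj_anti huk_lim hvj_lim μk νj
    μ ν hμweak hνweak hcap hcomp
end
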